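/- arXiv:1808.09782 — 7 statements merged into one kernel-verified Lean document; each statement's English description precedes it below -/
import Mathlib

section
/- Let p be a prime. For every nonempty closed subset A of ℚ_p^n (with the sup-norm topology on Fin n → ℚ_p), there exists a continuous retraction of ℚ_p^n onto A, i.e. a continuous map ω : ℚ_p^n → ℚ_p^n with range contained in A and ω(a) = a for every a ∈ A. (This is the instance of the paper's main theorem (Theorem 1.1) over the locally compact Henselian field ℚ_p, with the definability requirement dropped.) -/
set_option maxHeartbeats 1000000

open Metric Set

/-- Over the locally compact Henselian field `ℚ_p`, every nonempty closed subset `A` of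
`ℚ_p^n` is a retract of `ℚ_p^n`: there is a continuous map `ω : ℚ_p^n → ℚ_p^n` with range
contained in `A` fixing `A` pointwise. -/
theorem exists_continuous_retraction_padic (p : ℕ) [Fact p.Prime] (n : ℕ)
    (A : Set (Fin n → ℚ_[p])) (hne : A.Nonempty) (hA : IsClosed A) :
    ∃ ω : (Fin n → ℚ_[p]) → (Fin n → ℚ_[p]),
      Continuous ω ∧ Set.range ω ⊆ A ∧ ∀ a ∈ A, ω a = a := by
  classical
  -- the sup metric on `ℚ_p^n` is ultrametric
  have ultra : ∀ x y z : Fin n → ℚ_[p], dist x z ≤ max (dist x y) (dist y z) := by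
    intro x y z
    refine (dist_pi_le_iff (le_max_of_le_left dist_nonneg)).2 fun i => ?_
    calc dist (x i) (z i) ≤ max (dist (x i) (y i)) (dist (y i) (z i)) :=
          IsUltrametricDist.dist_triangle_max _ _ _
      _ ≤ max (dist x y) (dist y z) :=
          max_le_max (dist_le_pi_dist x y i) (dist_le_pi_dist y z i)
  haveI : Nonempty ↥A := hne.to_subtype
  -- countable dense sequence in `A`
  set u : ℕ → ↥A := TopologicalSpace.denseSeq ↥A with hu_def
  have hu : DenseRange u := TopologicalSpace.denseRange_denseSeq ↥A
  set f : ℕ → (Fin n → ℚ_[p]) := fun k => (u k : Fin n → ℚ_[p]) with hf_def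
  have hfA : ∀ k, f k ∈ A := fun k => (u k).2
  -- for `x ∉ A`, the distance to `A` is attained along the sequence `f`
  have hfind : ∀ x, x ∉ A → ∃ k, dist x (f k) = infDist x A := by
    intro x hx
    obtain ⟨a, haA, hd⟩ := hA.exists_infDist_eq_dist hne x
    have hr : 0 < infDist x A := (hA.notMem_iff_infDist_pos hne).1 hx
    obtain ⟨k, hk⟩ := (Metric.denseRange_iff.1 hu) ⟨a, haA⟩ (infDist x A) hr
    rw [Subtype.dist_eq] at hk
    refine ⟨k, le_antisymm ?_ (infDist_le_dist_of_mem (hfA k))⟩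
    calc dist x (f k) ≤ max (dist x a) (dist a (f k)) := ultra _ _ _
      _ ≤ infDist x A := max_le (le_of_eq hd.symm) hk.le
  -- the retraction
  set ω : (Fin n → ℚ_[p]) → (Fin n → ℚ_[p]) :=
    fun x => if hx : x ∈ A then x else f (Nat.find (hfind x hx)) with hω_def
  have hωA : ∀ x, ω x ∈ A := by
    intro x
    by_cases hx : x ∈ A
    · simpa [hω_def, hx] using hx
    · simp only [hω_def, hx, dif_neg, not_false_iff]
      exact hfA _
  have hωfix : ∀ a ∈ A, ω a = a := fun a ha => by simp [hω_def, ha]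
  have hωdist : ∀ x, dist x (ω x) = infDist x A := by
    intro x
    by_cases hx : x ∈ A
    · simp [hω_def, hx, infDist_zero_of_mem hx]
    · simp only [hω_def, hx, dif_neg, not_false_iff]
      exact Nat.find_spec (hfind x hx)
  refine ⟨ω, ?_, range_subset_iff.2 hωA, hωfix⟩
  rw [continuous_iff_continuousAt]
  intro x₀
  by_cases hx₀ : x₀ ∈ A
  · -- continuity at points of `A`
    rw [Metric.continuousAt_iff]
    intro ε hε
    refine ⟨ε, hε, fun {y} hy => ?_⟩
    have h1 : dist y (ω y) ≤ dist y x₀ := (hωdist y).le.trans (infDist_le_dist_of_mem hx₀)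
    calc dist (ω y) (ω x₀) = dist (ω y) x₀ := by rw [hωfix x₀ hx₀]
      _ ≤ max (dist (ω y) y) (dist y x₀) := ultra _ _ _
      _ ≤ dist y x₀ := max_le (by rwa [dist_comm]) le_rfl
      _ < ε := hy
  · -- `ω` is locally constant away from `A`
    have hr : 0 < infDist x₀ A := (hA.notMem_iff_infDist_pos hne).1 hx₀
    have hloc : ∀ y ∈ ball x₀ (infDist x₀ A), ω y = ω x₀ := by
      intro y hy
      rw [mem_ball] at hy
      -- distances from `y` and `x₀` to points of `A` agree
      have hdeq : ∀ a ∈ A, dist y a = dist x₀ a := by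
        intro a ha
        have h1 : infDist x₀ A ≤ dist x₀ a := infDist_le_dist_of_mem ha
        have h2 : dist y x₀ < dist x₀ a := lt_of_lt_of_le hy h1
        have h3 : dist y a ≤ dist x₀ a := by
          calc dist y a ≤ max (dist y x₀) (dist x₀ a) := ultra _ _ _
            _ = dist x₀ a := max_eq_right h2.le
        have h4 : dist x₀ a ≤ dist y a := by
          have h5 := ultra x₀ y a
          have h6 : dist x₀ y < dist x₀ a := by rwa [dist_comm x₀ y]
          rcases le_total (dist x₀ y) (dist y a) with h | h
          · rwa [max_eq_right h] at h5
          · rw [max_eq_left h] at h5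
            exact absurd (h5.trans_lt h6) (lt_irrefl _)
        exact le_antisymm h3 h4
      have hyA : y ∉ A := by
        intro hyA
        have h7 : infDist x₀ A ≤ dist y x₀ := by
          rw [dist_comm]; exact infDist_le_dist_of_mem hyA
        exact absurd hy (not_lt.2 h7)
      have hinf : infDist y A = infDist x₀ A := by
        refine le_antisymm ?_ ?_
        · obtain ⟨a, haA, hd⟩ := hA.exists_infDist_eq_dist hne x₀
          calc infDist y A ≤ dist y a := infDist_le_dist_of_mem haA
            _ = dist x₀ a := hdeq a haA
            _ = infDist x₀ A := hd.symm
        · by_contra h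
          push_neg at h
          obtain ⟨a, haA, hda⟩ := (infDist_lt_iff hne).1 h
          exact absurd (lt_of_le_of_lt (infDist_le_dist_of_mem haA)
            (by rw [hdeq a haA] at hda; exact hda)) (lt_irrefl _)
      have hiff : ∀ k, (dist y (f k) = infDist y A) ↔ (dist x₀ (f k) = infDist x₀ A) := by
        intro k
        rw [hdeq (f k) (hfA k), hinf]
      have hfindeq : Nat.find (hfind y hyA) = Nat.find (hfind x₀ hx₀) :=
        le_antisymm
          (Nat.find_le ((hiff _).2 (Nat.find_spec (hfind x₀ hx₀))))
          (Nat.find_le ((hiff _).1 (Nat.find_spec (hfind y hyA))))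
      simp only [hω_def, hyA, hx₀, dif_neg, not_false_iff, hfindeq]
    have hev : ω =ᶠ[nhds x₀] fun _ => ω x₀ := by
      filter_upwards [ball_mem_nhds x₀ hr] with y hy using hloc y hy
    exact (continuousAt_const (y := ω x₀)).congr hev.symm
end

section
/- Let p be a prime and let A be a nonempty closed subset of ℚ_p^n. Every continuous function f : A → ℚ_p admits a continuous extension F : ℚ_p^n → ℚ_p, i.e. F is continuous and F(a) = f(a) for all a ∈ A. (Non-Archimedean Tietze–Urysohn theorem, instance of the paper's Theorem 5.3 over ℚ_p.) -/
open Metric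

private lemma pi_ultra {p : ℕ} [Fact p.Prime] {n : ℕ} (x y z : Fin n → ℚ_[p]) :
    dist x z ≤ max (dist x y) (dist y z) := by
  refine (dist_pi_le_iff (le_trans dist_nonneg (le_max_left _ _))).mpr fun i => ?_
  exact (dist_triangle_max (x i) (y i) (z i)).trans
    (max_le_max (dist_le_pi_dist x y i) (dist_le_pi_dist y z i))

private lemma dist_eq_of_lt_infDist {p : ℕ} [Fact p.Prime] {n : ℕ}
    {A : Set (Fin n → ℚ_[p])} {x y : Fin n → ℚ_[p]}
    (h : dist x y < infDist x A) {a : Fin n → ℚ_[p]} (ha : a ∈ A) :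
    dist y a = dist x a := by
  have h1 : dist x y < dist x a := lt_of_lt_of_le h (infDist_le_dist_of_mem ha)
  have h2 : dist y a ≤ dist x a := by
    refine (pi_ultra y x a).trans ?_
    rw [dist_comm y x]
    exact max_le h1.le le_rfl
  have h3 : dist x a ≤ dist y a := by
    by_contra hc
    push_neg at hc
    exact absurd (pi_ultra x y a) (not_le.mpr (max_lt h1 hc))
  exact le_antisymm h2 h3

private lemma infDist_eq_of_lt {p : ℕ} [Fact p.Prime] {n : ℕ}
    {A : Set (Fin n → ℚ_[p])} {x y : Fin n → ℚ_[p]}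
    (h : dist x y < infDist x A) : infDist y A = infDist x A := by
  rw [infDist_eq_iInf, infDist_eq_iInf]
  exact iInf_congr fun a => dist_eq_of_lt_infDist h a.2

private def paSetoid {p : ℕ} [Fact p.Prime] {n : ℕ} (A : Set (Fin n → ℚ_[p]))
    (hne : A.Nonempty) (hA : IsClosed A) : Setoid {x : Fin n → ℚ_[p] // x ∉ A} where
  r a b := dist a.1 b.1 < infDist a.1 A
  iseqv := by
    constructor
    · intro a
      simpa [dist_self] using (hA.notMem_iff_infDist_pos hne).mp a.2
    · intro a b h
      have := infDist_eq_of_lt h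
      rw [this, dist_comm]
      exact h
    · intro a b c h1 h2
      refine lt_of_le_of_lt (pi_ultra a.1 b.1 c.1) (max_lt h1 ?_)
      rwa [← infDist_eq_of_lt h1]

private noncomputable def paRep {p : ℕ} [Fact p.Prime] {n : ℕ} (A : Set (Fin n → ℚ_[p]))
    (hne : A.Nonempty) (hA : IsClosed A) (x : {x : Fin n → ℚ_[p] // x ∉ A}) :
    {x : Fin n → ℚ_[p] // x ∉ A} :=
  (Quotient.mk (paSetoid A hne hA) x).out

private lemma paRep_rel {p : ℕ} [Fact p.Prime] {n : ℕ} (A : Set (Fin n → ℚ_[p]))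
    (hne : A.Nonempty) (hA : IsClosed A) (x : {x : Fin n → ℚ_[p] // x ∉ A}) :
    dist (paRep A hne hA x).1 x.1 < infDist (paRep A hne hA x).1 A :=
  Quotient.mk_out (s := paSetoid A hne hA) x

private lemma paRep_eq {p : ℕ} [Fact p.Prime] {n : ℕ} (A : Set (Fin n → ℚ_[p]))
    (hne : A.Nonempty) (hA : IsClosed A) (x y : {x : Fin n → ℚ_[p] // x ∉ A})
    (h : dist x.1 y.1 < infDist x.1 A) : paRep A hne hA x = paRep A hne hA y := by
  unfold paRep
  rw [Quotient.sound (s := paSetoid A hne hA) h]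

/-- Non-Archimedean Tietze–Urysohn theorem over `ℚ_p`: every continuous function on a
nonempty closed subset `A` of `ℚ_p^n` (with the subspace topology) extends to a continuous
function on all of `ℚ_p^n`. -/
theorem exists_continuous_extension_padic (p : ℕ) [Fact p.Prime] (n : ℕ)
    (A : Set (Fin n → ℚ_[p])) (hne : A.Nonempty) (hA : IsClosed A)
    (f : A → ℚ_[p]) (hf : Continuous f) :
    ∃ F : (Fin n → ℚ_[p]) → ℚ_[p], Continuous F ∧ ∀ a : A, F a = f a := by
  classical
  have hnear : ∀ x : Fin n → ℚ_[p], ∃ a ∈ A, infDist x A = dist x a :=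
    fun x => hA.exists_infDist_eq_dist hne x
  choose near hnearA hnearD using hnear
  let F : (Fin n → ℚ_[p]) → ℚ_[p] := fun x =>
    if h : x ∈ A then f ⟨x, h⟩ else f ⟨near (paRep A hne hA ⟨x, h⟩).1, hnearA _⟩
  refine ⟨F, ?_, fun a => by simp only [F, a.2, dif_pos]⟩
  rw [continuous_iff_continuousAt]
  intro x₀
  by_cases hx₀ : x₀ ∈ A
  · rw [Metric.continuousAt_iff]
    intro ε hε
    obtain ⟨δ, hδ, hδf⟩ := Metric.continuousAt_iff.mp (hf.continuousAt (x := ⟨x₀, hx₀⟩)) ε hε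
    refine ⟨δ, hδ, fun {x} hx => ?_⟩
    have hFx₀ : F x₀ = f ⟨x₀, hx₀⟩ := dif_pos hx₀
    by_cases hxA : x ∈ A
    · rw [show F x = f ⟨x, hxA⟩ from dif_pos hxA, hFx₀]
      exact hδf (by rwa [Subtype.dist_eq])
    · obtain ⟨y, hy⟩ : ∃ y, y = paRep A hne hA ⟨x, hxA⟩ := ⟨_, rfl⟩
      obtain ⟨b, hb⟩ : ∃ b, b = near y.1 := ⟨_, rfl⟩
      have hFx : F x = f ⟨near y.1, hnearA _⟩ := by rw [hy]; exact dif_neg hxA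
      have hD : infDist x A ≤ dist x x₀ := infDist_le_dist_of_mem hx₀
      have hry : dist y.1 x < infDist y.1 A := by
        rw [hy]; exact paRep_rel A hne hA ⟨x, hxA⟩
      have hDeq : infDist x A = infDist y.1 A := infDist_eq_of_lt hry
      have hdyb : dist y.1 b = infDist y.1 A := by rw [hb]; exact (hnearD y.1).symm
      have h1 : dist b y.1 ≤ dist x x₀ := by
        rw [dist_comm, hdyb, ← hDeq]; exact hD
      have h2 : dist y.1 x ≤ dist x x₀ := le_trans hry.le (hDeq ▸ hD)
      have hbx₀ : dist b x₀ < δ := by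
        calc dist b x₀ ≤ max (dist b y.1) (dist y.1 x₀) := pi_ultra _ _ _
          _ ≤ max (dist b y.1) (max (dist y.1 x) (dist x x₀)) :=
              max_le_max le_rfl (pi_ultra _ _ _)
          _ ≤ dist x x₀ := max_le h1 (max_le h2 le_rfl)
          _ < δ := hx
      rw [hFx, hFx₀]
      refine hδf ?_
      rw [Subtype.dist_eq]
      simpa [← hb] using hbx₀
  · have hball : Metric.ball x₀ (infDist x₀ A) ∈ nhds x₀ :=
      Metric.ball_mem_nhds _ ((hA.notMem_iff_infDist_pos hne).mp hx₀)
    have hconst : ∀ x ∈ Metric.ball x₀ (infDist x₀ A), F x = F x₀ := by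
      intro x hx
      rw [mem_ball] at hx
      have hx' : dist x₀ x < infDist x₀ A := by rwa [dist_comm] at hx
      have hxA : x ∉ A := fun h =>
        absurd (infDist_le_dist_of_mem h) (not_le.mpr hx')
      have hrel : dist x x₀ < infDist x A := by
        rw [dist_comm, infDist_eq_of_lt hx']; exact hx'
      show (if h : x ∈ A then f ⟨x, h⟩ else f ⟨near (paRep A hne hA ⟨x, h⟩).1, hnearA _⟩) = _
      rw [dif_neg hxA,
        show F x₀ = f ⟨near (paRep A hne hA ⟨x₀, hx₀⟩).1, hnearA _⟩ from dif_neg hx₀,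
        paRep_eq A hne hA ⟨x, hxA⟩ ⟨x₀, hx₀⟩ hrel]
    have hev : F =ᶠ[nhds x₀] fun _ => F x₀ :=
      Filter.eventuallyEq_of_mem hball hconst
    exact (continuousAt_const (y := F x₀)).congr hev.symm
end

section
/- Let p be a prime and let A be a nonempty closed subset of ℚ_p^n. There exists a ℚ_p-linear map T from the space of bounded continuous functions A → ℚ_p to the space of bounded continuous functions ℚ_p^n → ℚ_p such that (T f)(a) = f(a) for every f and every a ∈ A, and such that ‖T f‖ = ‖f‖ in the supremum norms (in particular T is a continuous linear extender). (Non-Archimedean Dugundji extension theorem, instance of the paper's Theorem 5.1 over ℚ_p.) -/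
open Metric TopologicalSpace

section Aux

variable {X : Type*} [MetricSpace X] [IsUltrametricDist X]

/-- Ultrametric isosceles: if `dist x y < dist x a` then `dist y a = dist x a`. -/
lemma ultra_dist_eq {x y a : X} (h : dist x y < dist x a) : dist y a = dist x a := by
  have h1 : dist y a ≤ dist x a := by
    refine le_trans (IsUltrametricDist.dist_triangle_max y x a) ?_
    rw [dist_comm y x]
    exact max_le (le_of_lt h) le_rfl
  have h2 : dist x a ≤ dist y a := by
    have := IsUltrametricDist.dist_triangle_max x y a
    rcases max_cases (dist x y) (dist y a) with ⟨he, _⟩ | ⟨he, _⟩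
    · rw [he] at this; exact absurd (lt_of_le_of_lt this h) (lt_irrefl _)
    · rw [he] at this; exact this
  exact le_antisymm h1 h2

omit [IsUltrametricDist X] in
lemma infDist_congr {A : Set X} (hne : A.Nonempty) {x y : X}
    (h : ∀ a ∈ A, dist x a = dist y a) : infDist x A = infDist y A := by
  have key : ∀ u v : X, (∀ a ∈ A, dist u a = dist v a) → infDist u A ≤ infDist v A := by
    intro u v huv
    by_contra hc
    push_neg at hc
    obtain ⟨a, ha, hda⟩ := (infDist_lt_iff hne).1 hc
    rw [← huv a ha] at hda
    exact absurd (lt_of_le_of_lt (infDist_le_dist_of_mem ha) hda) (lt_irrefl _)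
  exact le_antisymm (key x y h) (key y x fun a ha => (h a ha).symm)

end Aux

section Retract

variable {p : ℕ} [Fact p.Prime] {n : ℕ}

instance ultraPi : IsUltrametricDist (Fin n → ℚ_[p]) := by
  constructor
  intro x y z
  rw [dist_pi_le_iff (le_max_iff.2 (Or.inl dist_nonneg))]
  intro i
  exact le_trans (IsUltrametricDist.dist_triangle_max _ (y i) _)
    (max_le_max (dist_le_pi_dist x y i) (dist_le_pi_dist y z i))

variable (A : Set (Fin n → ℚ_[p]))

/-- For `x ∉ A` (A closed nonempty), there is a point of the dense sequence within
`2 * infDist x A` of `x`. -/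
lemma exists_close (hne : A.Nonempty) (hA : IsClosed A) (u : ℕ → A) (hu : DenseRange u)
    (x : Fin n → ℚ_[p]) (hx : x ∉ A) : ∃ k, dist x (u k : Fin n → ℚ_[p]) < 2 * infDist x A := by
  have hpos : 0 < infDist x A := (hA.notMem_iff_infDist_pos hne).1 hx
  have h2 : infDist x A < 2 * infDist x A := by linarith
  obtain ⟨a, haA, hda⟩ := (infDist_lt_iff hne).1 h2
  -- find u k within infDist x A of a
  obtain ⟨k, hk⟩ := hu.exists_dist_lt ⟨a, haA⟩ hpos
  refine ⟨k, ?_⟩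
  have hk' : dist a (u k : Fin n → ℚ_[p]) < infDist x A := by
    simpa [Subtype.dist_eq, dist_comm] using hk
  calc dist x (u k : Fin n → ℚ_[p])
      ≤ max (dist x a) (dist a (u k : Fin n → ℚ_[p])) :=
        IsUltrametricDist.dist_triangle_max _ _ _
    _ < 2 * infDist x A := max_lt hda (lt_trans hk' h2)

open Classical in
/-- The retraction map. -/
noncomputable def retr (hne : A.Nonempty) (hA : IsClosed A) (u : ℕ → A) (hu : DenseRange u) :
    (Fin n → ℚ_[p]) → A := fun x =>
  if h : x ∈ A then ⟨x, h⟩ else u (Nat.find (exists_close A hne hA u hu x h))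

lemma retr_mem (hne : A.Nonempty) (hA : IsClosed A) (u : ℕ → A) (hu : DenseRange u)
    {x : Fin n → ℚ_[p]} (hx : x ∈ A) : retr A hne hA u hu x = ⟨x, hx⟩ := by
  simp [retr, hx]

lemma retr_dist_le (hne : A.Nonempty) (hA : IsClosed A) (u : ℕ → A) (hu : DenseRange u)
    (x : Fin n → ℚ_[p]) :
    dist x (retr A hne hA u hu x : Fin n → ℚ_[p]) ≤ 2 * infDist x A := by
  by_cases hx : x ∈ A
  · rw [retr_mem A hne hA u hu hx]
    simp [infDist_nonneg]
  · rw [retr, dif_neg hx]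
    exact le_of_lt (Nat.find_spec (exists_close A hne hA u hu x hx))

lemma retr_locally_const (hne : A.Nonempty) (hA : IsClosed A) (u : ℕ → A) (hu : DenseRange u)
    {x y : Fin n → ℚ_[p]} (hx : x ∉ A) (hxy : dist x y < infDist x A) :
    retr A hne hA u hu y = retr A hne hA u hu x := by
  have hpos : 0 < infDist x A := (hA.notMem_iff_infDist_pos hne).1 hx
  have hdisteq : ∀ a ∈ A, dist y a = dist x a := by
    intro a ha
    exact ultra_dist_eq (lt_of_lt_of_le hxy (infDist_le_dist_of_mem ha))
  have hy : y ∉ A := by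
    intro hyA
    have := hdisteq y hyA
    simp only [dist_self] at this
    exact absurd (lt_of_lt_of_le hxy (infDist_le_dist_of_mem hyA))
      (by rw [← this]; exact lt_irrefl _)
  have hinf : infDist y A = infDist x A := infDist_congr hne hdisteq
  have hpred : ∀ k, (dist y (u k : Fin n → ℚ_[p]) < 2 * infDist y A) ↔
      (dist x (u k : Fin n → ℚ_[p]) < 2 * infDist x A) := by
    intro k
    rw [hinf, hdisteq (u k) (u k).2]
  rw [retr, retr, dif_neg hx, dif_neg hy]
  congr 1
  exact le_antisymm
    (Nat.find_le ((hpred _).2 (Nat.find_spec (exists_close A hne hA u hu x hx))))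
    (Nat.find_le ((hpred _).1 (Nat.find_spec (exists_close A hne hA u hu y hy))))

lemma retr_continuous (hne : A.Nonempty) (hA : IsClosed A) (u : ℕ → A) (hu : DenseRange u) :
    Continuous (retr A hne hA u hu) := by
  rw [continuous_iff_continuousAt]
  intro x
  by_cases hx : x ∈ A
  · -- continuity at points of A via the distance estimate
    rw [Metric.continuousAt_iff]
    intro ε hε
    refine ⟨ε / 2, by linarith, fun {y} hy => ?_⟩
    have h1 : dist (retr A hne hA u hu y : Fin n → ℚ_[p]) x
        ≤ max (dist (retr A hne hA u hu y : Fin n → ℚ_[p]) y) (dist y x) :=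
      IsUltrametricDist.dist_triangle_max _ _ _
    have h2 : dist y (retr A hne hA u hu y : Fin n → ℚ_[p]) ≤ 2 * infDist y A :=
      retr_dist_le A hne hA u hu y
    have h3 : infDist y A ≤ dist y x := infDist_le_dist_of_mem hx
    have h4 : dist (retr A hne hA u hu y : Fin n → ℚ_[p]) x < ε := by
      refine lt_of_le_of_lt h1 (max_lt ?_ (by linarith))
      rw [dist_comm]
      calc dist y (retr A hne hA u hu y : Fin n → ℚ_[p]) ≤ 2 * infDist y A := h2
        _ ≤ 2 * dist y x := by linarith
        _ < ε := by linarith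
    have : dist (retr A hne hA u hu y) (retr A hne hA u hu x)
        = dist (retr A hne hA u hu y : Fin n → ℚ_[p]) x := by
      rw [retr_mem A hne hA u hu hx, Subtype.dist_eq]
    rw [this]
    exact h4
  · -- locally constant at points not in A
    have hpos : 0 < infDist x A := (hA.notMem_iff_infDist_pos hne).1 hx
    have heq : ∀ᶠ y in nhds x, retr A hne hA u hu y = retr A hne hA u hu x := by
      filter_upwards [Metric.ball_mem_nhds x hpos] with y hy
      exact retr_locally_const A hne hA u hu hx (by rw [dist_comm]; exact hy)
    exact Filter.EventuallyEq.continuousAt heq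

end Retract

/-- Non-Archimedean Dugundji extension theorem over `ℚ_p`: for a nonempty closed subset `A`
of `ℚ_p^n` there is a `ℚ_p`-linear extender from bounded continuous functions on `A` to
bounded continuous functions on `ℚ_p^n`, which is isometric for the supremum norms. -/
theorem exists_linear_extender_padic (p : ℕ) [Fact p.Prime] (n : ℕ)
    (A : Set (Fin n → ℚ_[p])) (hne : A.Nonempty) (hA : IsClosed A) :
    ∃ T : BoundedContinuousFunction A ℚ_[p] →ₗ[ℚ_[p]]
          BoundedContinuousFunction (Fin n → ℚ_[p]) ℚ_[p],
      (∀ f : BoundedContinuousFunction A ℚ_[p], ∀ a : A, T f a = f a) ∧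
      (∀ f : BoundedContinuousFunction A ℚ_[p], ‖T f‖ = ‖f‖) := by
  haveI : Nonempty A := hne.to_subtype
  set u : ℕ → A := TopologicalSpace.denseSeq A
  have hu : DenseRange u := TopologicalSpace.denseRange_denseSeq A
  set r : C(Fin n → ℚ_[p], A) := ⟨retr A hne hA u hu, retr_continuous A hne hA u hu⟩ with hr
  refine ⟨{ toFun := fun f => f.compContinuous r
            map_add' := by intro f g; ext x; rfl
            map_smul' := by intro c f; ext x; rfl },
    ?_, ?_⟩
  · intro f a
    simp only [LinearMap.coe_mk, AddHom.coe_mk, BoundedContinuousFunction.compContinuous_apply]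
    congr 1
    show retr A hne hA u hu (a : Fin n → ℚ_[p]) = a
    rw [retr_mem A hne hA u hu a.2]
  · intro f
    refine le_antisymm ?_ ?_
    · refine (BoundedContinuousFunction.norm_le (norm_nonneg f)).2 fun x => ?_
      exact BoundedContinuousFunction.norm_coe_le_norm f _
    · refine (BoundedContinuousFunction.norm_le (norm_nonneg _)).2 fun a => ?_
      have : f a = (f.compContinuous r) (a : Fin n → ℚ_[p]) := by
        simp only [BoundedContinuousFunction.compContinuous_apply]
        congr 1
        show a = retr A hne hA u hu (a : Fin n → ℚ_[p])
        rw [retr_mem A hne hA u hu a.2]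
      rw [this]
      exact BoundedContinuousFunction.norm_coe_le_norm _ _
end

section
/- (Descent of retractions, topological content of the paper's Lemma 3.1.) Let M and N be topological spaces, let σ : M → N be a continuous surjective closed map, and let A be a closed subset of N such that σ is injective on σ⁻¹(N \ A) (so σ is bijective over N \ A). Suppose ρ : M → M is a continuous map with range contained in σ⁻¹(A) and ρ(x) = x for every x ∈ σ⁻¹(A). Let ω : N → N be any map satisfying ω(a) = a for all a ∈ A and ω(σ(x)) = σ(ρ(x)) for every x ∈ M with σ(x) ∉ A. Then ω is continuous, ω(a) = a for all a ∈ A, and the range of ω is contained in A; that is, ω is a continuous retraction of N onto A. -/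
/-- Descent of retractions (Lemma 3.1 of the paper, topological content): if `σ : M → N` is
a continuous surjective closed map, bijective over the complement of a closed set `A ⊆ N`,
and `ρ` is a continuous retraction of `M` onto `σ⁻¹(A)`, then any map `ω : N → N` with
`ω = id` on `A` and `ω ∘ σ = σ ∘ ρ` off `A` is a continuous retraction of `N` onto `A`. -/
theorem descent_of_retraction {M N : Type*} [TopologicalSpace M] [TopologicalSpace N]
    (σ : M → N) (hσc : Continuous σ) (hσsurj : Function.Surjective σ)
    (hσcl : IsClosedMap σ)
    (A : Set N) (hA : IsClosed A)
    (hinj : Set.InjOn σ (σ ⁻¹' Aᶜ))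
    (ρ : M → M) (hρc : Continuous ρ)
    (hρr : Set.range ρ ⊆ σ ⁻¹' A)
    (hρid : ∀ x ∈ σ ⁻¹' A, ρ x = x)
    (ω : N → N)
    (hωA : ∀ a ∈ A, ω a = a)
    (hωσ : ∀ x : M, σ x ∉ A → ω (σ x) = σ (ρ x)) :
    Continuous ω ∧ (∀ a ∈ A, ω a = a) ∧ Set.range ω ⊆ A := by
  have hkey : ∀ x : M, ω (σ x) = σ (ρ x) := by
    intro x
    by_cases h : σ x ∈ A
    · rw [hωA _ h, hρid x h]
    · exact hωσ x h
  have hq := hσcl.isQuotientMap hσc hσsurj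
  refine ⟨?_, hωA, ?_⟩
  · rw [hq.continuous_iff]
    have : ω ∘ σ = σ ∘ ρ := funext hkey
    rw [this]
    exact hσc.comp hρc
  · rintro _ ⟨n, rfl⟩
    obtain ⟨x, rfl⟩ := hσsurj n
    rw [hkey x]
    exact hρr ⟨x, rfl⟩
end

section
/- (Gluing a retraction with an identity piece, topological content of the induction step in the proof of the paper's Theorem 3.5.) Let X be a topological space, let E ⊆ X be open, let B ⊆ X be a set with (closure(E) \ E) ⊆ B, and let φ : X → X be a continuous map with range contained in B and φ(b) = b for every b ∈ B. Define ω : X → X by ω(x) = x for x ∈ E and ω(x) = φ(x) for x ∉ E. Then ω is continuous, ω(x) = x for all x ∈ E ∪ B, and the range of ω is contained in E ∪ B; that is, ω is a continuous retraction of X onto E ∪ B. -/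
/-- Gluing a retraction with an identity piece (induction step in the proof of Theorem 3.5
of the paper): if `E` is open, `closure E \ E ⊆ B`, and `φ` is a continuous retraction of
`X` onto `B`, then the map `ω` equal to the identity on `E` and to `φ` off `E` is a
continuous retraction of `X` onto `E ∪ B`. -/
theorem glue_retraction_with_identity {X : Type*} [TopologicalSpace X]
    (E B : Set X) (hE : IsOpen E) (hB : closure E \ E ⊆ B)
    (φ : X → X) (hφc : Continuous φ)
    (hφr : Set.range φ ⊆ B) (hφid : ∀ b ∈ B, φ b = b)
    (ω : X → X)
    (hω₁ : ∀ x ∈ E, ω x = x) (hω₂ : ∀ x ∉ E, ω x = φ x) :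
    Continuous ω ∧ (∀ x ∈ E ∪ B, ω x = x) ∧ Set.range ω ⊆ E ∪ B := by
  classical
  have hfr : ∀ a ∈ frontier (closure E), a = φ a := by
    intro a ha
    have h1 : a ∈ closure E := by simpa using frontier_subset_closure ha
    have h2 : a ∉ E := fun hin => ha.2 (interior_maximal subset_closure hE hin)
    exact (hφid a (hB ⟨h1, h2⟩)).symm
  have hωeq : ω = fun x => if x ∈ closure E then x else φ x := by
    funext x
    by_cases hx : x ∈ E
    · rw [hω₁ x hx, if_pos (subset_closure hx)]
    · rw [hω₂ x hx]
      by_cases hx' : x ∈ closure E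
      · rw [if_pos hx', (hφid x (hB ⟨hx', hx⟩))]
      · rw [if_neg hx']
  refine ⟨?_, ?_, ?_⟩
  · rw [hωeq]
    exact continuous_if (fun a ha => hfr a ha) continuousOn_id hφc.continuousOn
  · rintro x (hx | hx)
    · exact hω₁ x hx
    · by_cases hxE : x ∈ E
      · exact hω₁ x hxE
      · rw [hω₂ x hxE]; exact hφid x hx
  · rintro _ ⟨x, rfl⟩
    by_cases hx : x ∈ E
    · rw [hω₁ x hx]; exact Or.inl hx
    · rw [hω₂ x hx]; exact Or.inr (hφr ⟨x, rfl⟩)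
end

section
/- (Retraction onto a union of two coordinate subspaces, affine content of the paper's Proposition 2.11.) Let K be a field equipped with a valuation v : K → Γ₀, where Γ₀ is a linearly ordered commutative group with zero, and give K^n = (Fin n → K) the product of the valuation topologies. Let α and β be nonempty subsets of Fin n, and set C_α = {x ∈ K^n : ∀ i ∈ α, x_i = 0}, C_β = {x ∈ K^n : ∀ i ∈ β, x_i = 0}. For a nonempty S ⊆ Fin n let π_S : K^n → K^n be the map that replaces x_i by 0 for i ∈ S and leaves the other coordinates unchanged, and let d_S(x) = max_{i∈S} v(x_i) ∈ Γ₀. Define ω : K^n → K^n by ω(x) = π_α(x) if d_α(x) < d_β(x), ω(x) = π_β(x) if d_β(x) < d_α(x), and ω(x) = π_{α∪β}(x) if d_α(x) = d_β(x). Then ω is continuous, ω(x) = x for every x ∈ C_α ∪ C_β, and the range of ω is contained in C_α ∪ C_β; that is, ω is a continuous retraction of K^n onto C_α ∪ C_β. -/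
/-!
Where `d_α(x) < d_β(x)` (resp. `d_β(x) < d_α(x)`) this strict inequality persists on a
neighbourhood, so `ω` is locally `π_α` (resp. `π_β`). Where `d_α(x) = d_β(x) ≠ 0`, both are
locally constant because a nonzero valuation is locally constant, so `ω` is locally `π_{α∪β}`.
Where `d_α(x) = d_β(x) = 0`, the point `x` lies in `C_{α∪β}` and is fixed by all three
projections; as `ω(y)` is always one of them, `ω(y) → x`.
-/

open Filter Topology

theorem Filter.Tendsto.of_forall_exists_mem_finset {α β ι : Type*} {f : α → β} {g : ι → α → β}
    {s : Finset ι} {la : Filter α} {lb : Filter β} (hg : ∀ i ∈ s, Tendsto (g i) la lb)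
    (hf : ∀ a, ∃ i ∈ s, f a = g i a) : Tendsto f la lb := by
  intro t ht
  rw [mem_map]
  filter_upwards [(eventually_all_finset s).2 fun i hi => hg i hi ht] with a ha
  obtain ⟨i, hi, hfa⟩ := hf a
  simpa [hfa] using ha i hi

namespace Valued

variable {R : Type*} [Ring R] {Γ₀ : Type*} [LinearOrderedCommGroupWithZero Γ₀] [Valued R Γ₀]

/- The neighbourhood basis of `0` is indexed by the value group, not by `Γ₀`, so the radius is
taken to be an attained value `v a`. -/
theorem eventually_valuation_sub_lt (x : R) {a : R} (ha : v a ≠ 0) :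
    ∀ᶠ y in 𝓝 x, v (y - x) < v a := by
  rw [Filter.Eventually, mem_nhds]
  exact ⟨Units.mk0 (v.restrict a) (by simpa [Valuation.restrict_eq_zero_iff] using ha),
    fun y hy => by simpa using hy⟩

theorem eventually_valuation_lt {x a : R} (h : v x < v a) : ∀ᶠ y in 𝓝 x, v y < v a := by
  filter_upwards [eventually_valuation_sub_lt x (zero_le.trans_lt h).ne'] with y hy
  simpa using Valuation.map_add_lt _ hy h

theorem eventually_valuation_le {x a : R} (ha : v a ≠ 0) (h : v x ≤ v a) :
    ∀ᶠ y in 𝓝 x, v y ≤ v a := by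
  filter_upwards [eventually_valuation_sub_lt x ha] with y hy
  simpa using Valuation.map_add_le _ hy.le h

end Valued

section CoordSubspace

variable {ι M : Type*} [Zero M]

def coordSubspace (S : Finset ι) : Set (ι → M) := {x | ∀ i ∈ S, x i = 0}

theorem coordSubspace_anti {S T : Finset ι} (h : S ⊆ T) :
    (coordSubspace T : Set (ι → M)) ⊆ coordSubspace S := fun _ hx i hi => hx i (h hi)

variable [DecidableEq ι]

def coordProj (S : Finset ι) (x : ι → M) : ι → M := fun i => if i ∈ S then 0 else x i

theorem coordProj_mem_coordSubspace (S : Finset ι) (x : ι → M) :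
    coordProj S x ∈ coordSubspace S := fun _ hi => if_pos hi

theorem coordProj_eq_self {S : Finset ι} {x : ι → M} (hx : x ∈ coordSubspace S) :
    coordProj S x = x := funext fun i => by by_cases hi : i ∈ S <;> simp [coordProj, hi, hx i]

theorem coordSubspace_union (S T : Finset ι) :
    (coordSubspace (S ∪ T) : Set (ι → M)) = coordSubspace S ∩ coordSubspace T := by
  ext x
  simp [coordSubspace, or_imp, forall_and]

theorem continuous_coordProj [TopologicalSpace M] (S : Finset ι) :
    Continuous (coordProj S : (ι → M) → ι → M) :=
  continuous_pi fun i => by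
    by_cases hi : i ∈ S
    · simpa [coordProj, hi] using continuous_const
    · simpa [coordProj, hi] using continuous_apply i

end CoordSubspace

section SupValuation

variable {ι K Γ₀ : Type*} [LinearOrderedCommGroupWithZero Γ₀]

def supValuation [Ring K] [Valued K Γ₀] (S : Finset ι) (hS : S.Nonempty) (x : ι → K) : Γ₀ :=
  S.sup' hS fun i => Valued.v (x i)

section Ring

variable [Ring K] [Valued K Γ₀] {S T : Finset ι} (hS : S.Nonempty) (hT : T.Nonempty) {x : ι → K}

theorem exists_mem_supValuation_eq (x : ι → K) : ∃ j ∈ S, supValuation S hS x = Valued.v (x j) :=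
  S.exists_mem_eq_sup' hS _

theorem valuation_le_supValuation (x : ι → K) {i : ι} (hi : i ∈ S) :
    Valued.v (x i) ≤ supValuation S hS x :=
  S.le_sup' (fun i => Valued.v (x i)) hi

theorem eventually_supValuation_lt {a : K} (h : supValuation S hS x < Valued.v a) :
    ∀ᶠ y in 𝓝 x, supValuation S hS y < Valued.v a := by
  have hcoord : ∀ i ∈ S, ∀ᶠ y in 𝓝 x, Valued.v (y i) < Valued.v a := fun i hi =>
    (continuous_apply i).continuousAt.eventually
      (Valued.eventually_valuation_lt ((valuation_le_supValuation hS x hi).trans_lt h))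
  filter_upwards [(eventually_all_finset S).2 hcoord] with y hy
  exact (Finset.sup'_lt_iff hS).2 hy

theorem eventually_supValuation_eq (h : supValuation S hS x ≠ 0) :
    ∀ᶠ y in 𝓝 x, supValuation S hS y = supValuation S hS x := by
  obtain ⟨j, hj, hxj⟩ := exists_mem_supValuation_eq hS x
  rw [hxj] at h ⊢
  have hle : ∀ i ∈ S, ∀ᶠ y in 𝓝 x, Valued.v (y i) ≤ Valued.v (x j) := fun i hi =>
    (continuous_apply i).continuousAt.eventually
      (Valued.eventually_valuation_le h (hxj ▸ valuation_le_supValuation hS x hi))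
  have hconst : ∀ᶠ y in 𝓝 x, Valued.v (y j) = Valued.v (x j) :=
    (continuous_apply j).continuousAt.eventually (Valued.locally_const h)
  filter_upwards [(eventually_all_finset S).2 hle, hconst] with y hle hconst
  exact le_antisymm (Finset.sup'_le _ _ hle) (hconst ▸ valuation_le_supValuation hS y hj)

theorem eventually_supValuation_lt_supValuation
    (h : supValuation S hS x < supValuation T hT x) :
    ∀ᶠ y in 𝓝 x, supValuation S hS y < supValuation T hT y := by
  obtain ⟨j, -, hxj⟩ := exists_mem_supValuation_eq hT x
  filter_upwards [eventually_supValuation_eq hT (zero_le.trans_lt h).ne',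
    eventually_supValuation_lt hS (hxj ▸ h)] with y hyT hyS
  rwa [hyT, hxj]

end Ring

theorem supValuation_eq_zero_iff [DivisionRing K] [Valued K Γ₀] {S : Finset ι}
    (hS : S.Nonempty) {x : ι → K} : supValuation S hS x = 0 ↔ x ∈ coordSubspace S := by
  rw [supValuation, ← le_zero_iff, Finset.sup'_le_iff]
  simp only [le_zero_iff, Valuation.zero_iff]
  rfl

end SupValuation

section UnionRetraction

variable {ι K Γ₀ : Type*} [DecidableEq ι] [DivisionRing K] [LinearOrderedCommGroupWithZero Γ₀]
  [Valued K Γ₀] {α β : Finset ι} (hα : α.Nonempty) (hβ : β.Nonempty) {x : ι → K}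

def unionRetraction (x : ι → K) : ι → K :=
  if supValuation α hα x < supValuation β hβ x then coordProj α x
  else if supValuation β hβ x < supValuation α hα x then coordProj β x
  else coordProj (α ∪ β) x

theorem unionRetraction_of_lt (h : supValuation α hα x < supValuation β hβ x) :
    unionRetraction hα hβ x = coordProj α x := by
  simp [unionRetraction, h]

theorem unionRetraction_of_gt (h : supValuation β hβ x < supValuation α hα x) :
    unionRetraction hα hβ x = coordProj β x := by
  simp [unionRetraction, h, h.not_gt]

theorem unionRetraction_of_eq (h : supValuation α hα x = supValuation β hβ x) :
    unionRetraction hα hβ x = coordProj (α ∪ β) x := by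
  simp [unionRetraction, h]

theorem exists_subset_unionRetraction_eq_coordProj (x : ι → K) :
    ∃ S ⊆ α ∪ β, unionRetraction hα hβ x = coordProj S x := by
  rcases lt_trichotomy (supValuation α hα x) (supValuation β hβ x) with h | h | h
  · exact ⟨α, Finset.subset_union_left, unionRetraction_of_lt hα hβ h⟩
  · exact ⟨α ∪ β, subset_rfl, unionRetraction_of_eq hα hβ h⟩
  · exact ⟨β, Finset.subset_union_right, unionRetraction_of_gt hα hβ h⟩

theorem unionRetraction_mem (x : ι → K) :
    unionRetraction hα hβ x ∈ coordSubspace α ∪ coordSubspace β := by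
  rcases lt_trichotomy (supValuation α hα x) (supValuation β hβ x) with h | h | h
  · exact .inl (unionRetraction_of_lt hα hβ h ▸ coordProj_mem_coordSubspace α x)
  · refine .inl (coordSubspace_anti (T := α ∪ β) Finset.subset_union_left ?_)
    exact unionRetraction_of_eq hα hβ h ▸ coordProj_mem_coordSubspace (α ∪ β) x
  · exact .inr (unionRetraction_of_gt hα hβ h ▸ coordProj_mem_coordSubspace β x)

theorem unionRetraction_eq_self (hx : x ∈ coordSubspace α ∪ coordSubspace β) :
    unionRetraction hα hβ x = x := by
  simp only [Set.mem_union, ← supValuation_eq_zero_iff hα, ← supValuation_eq_zero_iff hβ] at hx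
  rcases lt_trichotomy (supValuation α hα x) (supValuation β hβ x) with h | h | h
  · rw [unionRetraction_of_lt hα hβ h, coordProj_eq_self]
    rw [← supValuation_eq_zero_iff hα]
    exact hx.resolve_right (zero_le.trans_lt h).ne'
  · rw [unionRetraction_of_eq hα hβ h, coordProj_eq_self]
    rw [coordSubspace_union, Set.mem_inter_iff, ← supValuation_eq_zero_iff hα,
      ← supValuation_eq_zero_iff hβ]
    exact hx.elim (fun hx => ⟨hx, h ▸ hx⟩) fun hx => ⟨h ▸ hx, hx⟩
  · rw [unionRetraction_of_gt hα hβ h, coordProj_eq_self]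
    rw [← supValuation_eq_zero_iff hβ]
    exact hx.resolve_left (zero_le.trans_lt h).ne'

theorem continuousAt_unionRetraction_of_mem (hx : x ∈ coordSubspace (α ∪ β)) :
    ContinuousAt (unionRetraction hα hβ) x := by
  have hfix : unionRetraction hα hβ x = x := by
    rw [coordSubspace_union] at hx
    exact unionRetraction_eq_self hα hβ (.inl hx.1)
  rw [ContinuousAt, hfix]
  refine Tendsto.of_forall_exists_mem_finset (s := (α ∪ β).powerset) (fun S hS => ?_)
    fun y => (exists_subset_unionRetraction_eq_coordProj hα hβ y).imp
      fun S hS => ⟨Finset.mem_powerset.2 hS.1, hS.2⟩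
  exact (continuous_coordProj S).tendsto' x x
    (coordProj_eq_self (coordSubspace_anti (Finset.mem_powerset.1 hS) hx))

theorem continuous_unionRetraction : Continuous (unionRetraction hα hβ : (ι → K) → ι → K) := by
  refine continuous_iff_continuousAt.2 fun x => ?_
  rcases lt_trichotomy (supValuation α hα x) (supValuation β hβ x) with h | h | h
  · refine (continuous_coordProj α).continuousAt.congr_of_eventuallyEq ?_
    filter_upwards [eventually_supValuation_lt_supValuation hα hβ h] with y hy
    exact unionRetraction_of_lt hα hβ hy
  · by_cases h0 : supValuation α hα x = 0
    · refine continuousAt_unionRetraction_of_mem hα hβ ?_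
      rw [coordSubspace_union]
      exact ⟨(supValuation_eq_zero_iff hα).1 h0, (supValuation_eq_zero_iff hβ).1 (h ▸ h0)⟩
    · refine (continuous_coordProj (α ∪ β)).continuousAt.congr_of_eventuallyEq ?_
      filter_upwards [eventually_supValuation_eq hα h0,
        eventually_supValuation_eq hβ (h ▸ h0)] with y hyα hyβ
      exact unionRetraction_of_eq hα hβ (by rw [hyα, hyβ, h])
  · refine (continuous_coordProj β).continuousAt.congr_of_eventuallyEq ?_
    filter_upwards [eventually_supValuation_lt_supValuation hβ hα h] with y hy
    exact unionRetraction_of_gt hα hβ hy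

end UnionRetraction

/-- Retraction onto a union of two coordinate subspaces (affine content of Proposition 2.11
of the paper): over a valued field `K`, the map `ω` that projects `x` onto the coordinate
subspace `C_α` (resp. `C_β`, resp. `C_{α∪β}`) according to the comparison of
`d_α(x) = max_{i∈α} v(x_i)` and `d_β(x)` is a continuous retraction of `K^n` onto
`C_α ∪ C_β`. -/
theorem retraction_onto_two_coordinate_subspaces
    {K : Type*} [Field K] {Γ₀ : Type*} [LinearOrderedCommGroupWithZero Γ₀]
    [Valued K Γ₀] (n : ℕ)
    (α β : Finset (Fin n)) (hα : α.Nonempty) (hβ : β.Nonempty)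
    (ω : (Fin n → K) → (Fin n → K))
    (hω₁ : ∀ x : Fin n → K,
      α.sup' hα (fun i => Valued.v (x i)) < β.sup' hβ (fun i => Valued.v (x i)) →
        ω x = fun i => if i ∈ α then 0 else x i)
    (hω₂ : ∀ x : Fin n → K,
      β.sup' hβ (fun i => Valued.v (x i)) < α.sup' hα (fun i => Valued.v (x i)) →
        ω x = fun i => if i ∈ β then 0 else x i)
    (hω₃ : ∀ x : Fin n → K,
      α.sup' hα (fun i => Valued.v (x i)) = β.sup' hβ (fun i => Valued.v (x i)) →
        ω x = fun i => if i ∈ α ∪ β then 0 else x i) :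
    Continuous ω ∧
    Set.range ω ⊆ ({x | ∀ i ∈ α, x i = 0} ∪ {x | ∀ i ∈ β, x i = 0}) ∧
    ∀ x ∈ ({x | ∀ i ∈ α, x i = 0} ∪ {x | ∀ i ∈ β, x i = 0} : Set (Fin n → K)),
      ω x = x := by
  obtain rfl : ω = unionRetraction hα hβ := funext fun x => by
    rcases lt_trichotomy (supValuation α hα x) (supValuation β hβ x) with h | h | h
    · exact (hω₁ x h).trans (unionRetraction_of_lt hα hβ h).symm
    · exact (hω₃ x h).trans (unionRetraction_of_eq hα hβ h).symm
    · exact (hω₂ x h).trans (unionRetraction_of_gt hα hβ h).symm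
  exact ⟨continuous_unionRetraction hα hβ, Set.range_subset_iff.2 (unionRetraction_mem hα hβ),
    fun x hx => unionRetraction_eq_self hα hβ hx⟩
end

section
/- (Retraction onto a finite union of coordinate subspaces, affine content of the paper's Proposition 2.11 and Corollary 2.12.) Let K be a field equipped with a valuation v : K → Γ₀, where Γ₀ is a linearly ordered commutative group with zero, and give K^n = (Fin n → K) the product of the valuation topologies. Let α₁, …, α_k be finitely many subsets of Fin n and let C = ⋃_{j=1}^{k} {x ∈ K^n : ∀ i ∈ α_j, x_i = 0} (a union of coordinate subspaces, i.e. an snc subvariety in coordinates). If C is nonempty, then there exists a continuous map ω : K^n → K^n with range contained in C and ω(x) = x for all x ∈ C; that is, C is a retract of K^n. -/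
/-!
Measure the distance from `x` to `C_S` by `d_S(x) = max_{i ∈ S} v(x_i)` and let `ω(x)` be `x`
with the coordinates in `α_j` set to zero, for some `j` minimizing `d_{α_j}(x)`; on `C` the
minimum is `0`, so `ω` fixes `C`. For `y` close to `x`, every `v(y_i)` with `x_i ≠ 0` equals
`v(x_i)`, and every `v(y_i)` with `x_i = 0` lies below all nonzero `v(x_l)`. The distances then
either do not change, so the same `j` is chosen at `y` and at `x`, or `x` lies on both chosen
subspaces, which makes the two projections agree at `x`. Either way `ω` is continuous at `x`.
-/

open Filter Topology

theorem Finset.nonempty_of_sup_ne_bot {ι β : Type*} [SemilatticeSup β] [OrderBot β]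
    {s : Finset ι} {f : ι → β} (h : s.sup f ≠ ⊥) : s.Nonempty :=
  s.nonempty_of_ne_empty (by rintro rfl; exact h sup_empty)

section TinyPerturbation

variable {ι κ β : Type*} [LinearOrder β] [OrderBot β]

/-- The relation between `i ↦ v (x i)` and `i ↦ v (y i)` for `y` close to `x` in a valued
field. -/
def IsTinyPerturbation (a b : ι → β) : Prop :=
  (∀ i, a i ≠ ⊥ → b i = a i) ∧ ∀ i l, a i = ⊥ → a l ≠ ⊥ → b i < a l

namespace IsTinyPerturbation

variable {a b : ι → β}

theorem finset_sup_eq (h : IsTinyPerturbation a b) {s : Finset ι} (hs : s.sup a ≠ ⊥) :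
    s.sup b = s.sup a := by
  obtain ⟨l, -, hl⟩ := s.exists_mem_eq_sup (Finset.nonempty_of_sup_ne_bot hs) a
  refine le_antisymm (Finset.sup_le fun i hi => ?_) (Finset.sup_mono_fun fun i _ => ?_)
  · by_cases hai : a i = ⊥
    · exact (h.2 i l hai (hl ▸ hs)).le.trans hl.ge
    · exact (h.1 i hai).trans_le (Finset.le_sup hi)
  · by_cases hai : a i = ⊥
    · exact hai ▸ bot_le
    · exact (h.1 i hai).ge

theorem finset_sup_lt (h : IsTinyPerturbation a b) {s t : Finset ι} (hs : s.sup a = ⊥)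
    (ht : t.sup a ≠ ⊥) : s.sup b < t.sup a := by
  obtain ⟨l, -, hl⟩ := t.exists_mem_eq_sup (Finset.nonempty_of_sup_ne_bot ht) a
  rw [hl] at ht ⊢
  exact (Finset.sup_lt_iff (bot_lt_iff_ne_bot.2 ht)).2 fun i hi =>
    h.2 i l ((Finset.sup_eq_bot_iff _ _).1 hs i hi) ht

theorem finset_sup (h : IsTinyPerturbation a b) (s : κ → Finset ι) :
    IsTinyPerturbation (fun j => (s j).sup a) (fun j => (s j).sup b) :=
  ⟨fun _ hj => h.finset_sup_eq hj, fun _ _ hj hl => h.finset_sup_lt hj hl⟩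

theorem eq_or_argmin_eq_bot (h : IsTinyPerturbation a b) {i₀ i₁ : ι} (h₀ : ∀ i, a i₀ ≤ a i)
    (h₁ : ∀ i, b i₁ ≤ b i) : b = a ∨ a i₀ = ⊥ ∧ a i₁ = ⊥ := by
  by_cases ha₀ : a i₀ = ⊥
  · refine Or.inr ⟨ha₀, ?_⟩
    by_contra ha₁
    exact (h.2 i₀ i₁ ha₀ ha₁).not_ge (h.1 i₁ ha₁ ▸ h₁ i₀)
  · exact Or.inl (funext fun i => h.1 i fun hai => ha₀ (eq_bot_iff.2 (hai ▸ h₀ i)))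

end IsTinyPerturbation

end TinyPerturbation

theorem continuousAt_selected_of_eventually_eq {X Y κ : Type*} [TopologicalSpace X]
    [TopologicalSpace Y] [Finite κ] {f : κ → X → Y} {J : X → κ} {x : X}
    (hf : ∀ j, ContinuousAt (f j) x) (hJ : ∀ᶠ y in 𝓝 x, f (J y) x = f (J x) x) :
    ContinuousAt (fun y => f (J y) y) x := by
  refine fun V hV => mem_map.2 ?_
  have hV' : ∀ᶠ y in 𝓝 x, ∀ j, f j x = f (J x) x → f j y ∈ V :=
    eventually_all.2 fun j => eventually_imp_distrib_left.2 fun hj => hf j (hj ▸ hV)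
  filter_upwards [hJ, hV'] with y hy hyV using hyV _ hy

section CoordinateSubspace

variable {R ι : Type*} [Zero R]

def coordinateSubspace (s : Set ι) : Set (ι → R) :=
  {x | ∀ i ∈ s, x i = 0}

theorem indicator_compl_mem_coordinateSubspace (s : Set ι) (x : ι → R) :
    sᶜ.indicator x ∈ coordinateSubspace s :=
  fun _ hi => Set.indicator_of_notMem (Set.notMem_compl_iff.2 hi) x

theorem indicator_compl_eq_self_of_mem {s : Set ι} {x : ι → R} (hx : x ∈ coordinateSubspace s) :
    sᶜ.indicator x = x :=
  Set.indicator_eq_self.2 fun i hxi his => hxi (hx i his)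

theorem continuous_indicator_compl [TopologicalSpace R] (s : Set ι) :
    Continuous fun x : ι → R => sᶜ.indicator x :=
  continuous_pi fun i => by
    by_cases hi : i ∈ s
    · simpa [hi] using continuous_const
    · simpa [hi] using continuous_apply i

end CoordinateSubspace

namespace Valued

variable {R Γ₀ ι : Type*} [DivisionRing R] [LinearOrderedCommGroupWithZero Γ₀] [Valued R Γ₀]

theorem setOf_lt_mem_nhds_zero {r : R} (hr : v r ≠ 0) : {z : R | v z < v r} ∈ 𝓝 0 :=
  mem_nhds_zero.2
    ⟨Units.mk0 (v.restrict r) (by simpa using hr), fun _ hz => v.restrict_lt_iff.1 hz⟩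

theorem eventually_isTinyPerturbation [Finite ι] (x : ι → R) :
    ∀ᶠ y in 𝓝 x, IsTinyPerturbation (fun i => v (x i)) (fun i => v (y i)) := by
  have hcoord (i : ι) : Tendsto (fun y : ι → R => y i) (𝓝 x) (𝓝 (x i)) :=
    (continuous_apply i).continuousAt
  simp only [IsTinyPerturbation, bot_eq_zero]
  refine (eventually_all.2 fun i => ?_).and (eventually_all.2 fun i => eventually_all.2 fun l => ?_)
  · exact eventually_imp_distrib_left.2 fun hi => hcoord i (locally_const hi)
  · refine eventually_imp_distrib_left.2 fun hi => eventually_imp_distrib_left.2 fun hl => ?_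
    rw [map_eq_zero] at hi
    exact hcoord i (hi ▸ setOf_lt_mem_nhds_zero hl)

theorem sup_v_eq_bot_iff_mem_coordinateSubspace [Fintype ι] {s : Set ι} [DecidablePred (· ∈ s)]
    {x : ι → R} :
    (s.toFinset.sup fun i => v (x i)) = ⊥ ↔ x ∈ coordinateSubspace s := by
  simp [coordinateSubspace, bot_eq_zero]

theorem exists_retraction_onto_iUnion_coordinateSubspace [Fintype ι] {κ : Type*} [Finite κ]
    [Nonempty κ] (s : κ → Set ι) :
    ∃ ω : (ι → R) → ι → R, Continuous ω ∧ Set.range ω ⊆ ⋃ j, coordinateSubspace (s j) ∧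
      ∀ x ∈ ⋃ j, coordinateSubspace (s j), ω x = x := by
  classical
  choose sel hsel using fun g : κ → Γ₀ => Finite.exists_min g
  let d (x : ι → R) (j : κ) : Γ₀ := (s j).toFinset.sup fun i => v (x i)
  refine ⟨fun y => (s (sel (d y)))ᶜ.indicator y, continuous_iff_continuousAt.2 fun x => ?_, ?_, ?_⟩
  · refine continuousAt_selected_of_eventually_eq (f := fun j => (s j)ᶜ.indicator)
      (fun j => (continuous_indicator_compl (s j)).continuousAt) ?_
    filter_upwards [eventually_isTinyPerturbation x] with y hy
    rcases (hy.finset_sup fun j => (s j).toFinset).eq_or_argmin_eq_bot (hsel (d x)) (hsel (d y))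
      with hdy | ⟨hx, hxy⟩
    · exact congrArg (fun g => (s (sel g))ᶜ.indicator x) hdy
    · rw [indicator_compl_eq_self_of_mem (sup_v_eq_bot_iff_mem_coordinateSubspace.1 hx),
        indicator_compl_eq_self_of_mem (sup_v_eq_bot_iff_mem_coordinateSubspace.1 hxy)]
  · rintro _ ⟨y, rfl⟩
    exact Set.mem_iUnion.2 ⟨_, indicator_compl_mem_coordinateSubspace _ y⟩
  · intro x hx
    obtain ⟨j, hj⟩ := Set.mem_iUnion.1 hx
    have hdx : d x (sel (d x)) = ⊥ :=
      eq_bot_iff.2 ((hsel (d x) j).trans (sup_v_eq_bot_iff_mem_coordinateSubspace.2 hj).le)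
    exact indicator_compl_eq_self_of_mem (sup_v_eq_bot_iff_mem_coordinateSubspace.1 hdx)

end Valued

/-- Retraction onto a finite union of coordinate subspaces (affine content of
Proposition 2.11 and Corollary 2.12 of the paper): over a valued field `K`, every nonempty
finite union `C` of coordinate subspaces of `K^n` is a retract of `K^n`. -/
theorem retraction_onto_union_of_coordinate_subspaces
    {K : Type*} [Field K] {Γ₀ : Type*} [LinearOrderedCommGroupWithZero Γ₀]
    [Valued K Γ₀] (n k : ℕ) (α : Fin k → Set (Fin n))
    (C : Set (Fin n → K))
    (hC : C = ⋃ j, {x : Fin n → K | ∀ i ∈ α j, x i = 0})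
    (hne : C.Nonempty) :
    ∃ ω : (Fin n → K) → (Fin n → K),
      Continuous ω ∧ Set.range ω ⊆ C ∧ ∀ x ∈ C, ω x = x := by
  subst hC
  obtain ⟨j, -⟩ := Set.mem_iUnion.1 hne.some_mem
  have : Nonempty (Fin k) := ⟨j⟩
  exact Valued.exists_retraction_onto_iUnion_coordinateSubspace α
end
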